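/- Let A and F be positive integers with A + F > 0. If the integers are partitioned into consecutive blocks of length A + F, and in each block the first A indices are active while the last F are inactive, and F ≥ ⌈L_T/2⌉, then in the Wyner L_T interference model no active user in one block interferes with any active user in a different block. Consequently the fraction of active users is A/(A+F). -/

import Mathlib

/-!
Write `P = A + F`. An active user `m` sits at offset `m % P < A` of its block, so every later
block starts more than `P - A = F` positions after `m`. Hence active users in different blocks
are more than `F ≥ ⌈L_T/2⌉ ≥ ⌊L_T/2⌋` apart, outside the interference window
`[j - ⌊L_T/2⌋, j + ⌈L_T/2⌉]` of the Wyner model. Each block contains exactly `A` active users,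
which gives the count.
-/

open Finset

/-- `(L + 1) / 2` and `L / 2` are `⌈L/2⌉` and `⌊L/2⌋`. -/
def WynerInterferes (L : ℕ) (j i : ℤ) : Prop :=
  i ≠ j ∧ j - (L : ℤ) / 2 ≤ i ∧ i ≤ j + ((L : ℤ) + 1) / 2

theorem WynerInterferes.abs_sub_le {L : ℕ} {j i : ℤ} (h : WynerInterferes L j i) :
    |i - j| ≤ ((L : ℤ) + 1) / 2 := by
  obtain ⟨-, hlo, hhi⟩ := h
  rw [abs_le]
  constructor <;> omega

namespace Int

variable {P A m n : ℤ}

theorem sub_lt_sub_of_emod_lt_of_ediv_lt (hP : 0 ≤ P) (hm : m % P < A) (h : m / P < n / P) :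
    P - A < n - m := by
  have hP0 : P ≠ 0 := by
    rintro rfl
    simp at h
  have hn := emod_nonneg n hP0
  have hm_eq := mul_ediv_add_emod m P
  have hn_eq := mul_ediv_add_emod n P
  have hblock : P * (m / P + 1) ≤ P * (n / P) := mul_le_mul_of_nonneg_left h hP
  linarith

theorem sub_lt_abs_sub_of_emod_lt_of_ediv_ne (hP : 0 ≤ P) (hm : m % P < A) (hn : n % P < A)
    (h : m / P ≠ n / P) : P - A < |n - m| := by
  rcases h.lt_or_gt with h | h
  · exact (sub_lt_sub_of_emod_lt_of_ediv_lt hP hm h).trans_le (le_abs_self _)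
  · rw [abs_sub_comm]
    exact (sub_lt_sub_of_emod_lt_of_ediv_lt hP hn h).trans_le (le_abs_self _)

end Int

namespace Nat

variable {P A : ℕ}

theorem count_mod_lt_self (hAP : A ≤ P) : count (fun k => k % P < A) P = A := by
  rw [count_eq_card_filter_range]
  convert card_range A using 2
  ext k
  simp only [mem_filter, mem_range]
  constructor
  · rintro ⟨hk, hkA⟩
    rwa [mod_eq_of_lt hk] at hkA
  · intro hk
    exact ⟨hk.trans_le hAP, (mod_le k P).trans_lt hk⟩

theorem count_mod_lt_mul (hAP : A ≤ P) (B : ℕ) : count (fun k => k % P < A) (P * B) = A * B := by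
  induction B with
  | zero => simp
  | succ B ih =>
    rw [mul_succ, count_add, ih]
    simp only [mul_add_mod_self_left]
    rw [count_mod_lt_self hAP, mul_succ]

end Nat

theorem block_scheme_no_interference_general (L_T A F : ℕ)
    (hFL : (L_T + 1) / 2 ≤ F) :
    (∀ m n : ℤ, m % (A + F) < A → n % (A + F) < A →
      m / (A + F) ≠ n / (A + F) →
      ¬ (n ≠ m ∧ m - (L_T : ℤ) / 2 ≤ n ∧ n ≤ m + ((L_T : ℤ) + 1) / 2)) ∧
    (∀ B : ℕ,
      ((Finset.range ((A + F) * B)).filter (fun n => n % (A + F) < A)).card = A * B) := by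
  refine ⟨fun m n hm hn hblocks hinterf => ?_, fun B => ?_⟩
  · have hsep := Int.sub_lt_abs_sub_of_emod_lt_of_ediv_ne (by positivity) hm hn hblocks
    have hwindow := WynerInterferes.abs_sub_le (L := L_T) (j := m) (i := n) hinterf
    omega
  · rw [← Nat.count_eq_card_filter_range]
    exact Nat.count_mod_lt_mul (Nat.le_add_right A F) B

/-- Blocks of `A` active users followed by `F ≥ ⌈L_T/2⌉` inactive users: active users in
different blocks do not interfere in the Wyner `L_T` model, and the fraction of active
users is `A/(A+F)`. -/
theorem block_scheme_no_interference (L_T A F : ℕ) (hA : 0 < A) (hF : 0 < F)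
    (hFL : (L_T + 1) / 2 ≤ F) :
    (∀ m n : ℤ, m % (A + F) < A → n % (A + F) < A →
      m / (A + F) ≠ n / (A + F) →
      ¬ (n ≠ m ∧ m - (L_T : ℤ) / 2 ≤ n ∧ n ≤ m + ((L_T : ℤ) + 1) / 2)) ∧
    (∀ B : ℕ,
      ((Finset.range ((A + F) * B)).filter (fun n => n % (A + F) < A)).card = A * B) :=
  block_scheme_no_interference_general L_T A F hFL
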